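/- Let (K, σ) be a σ-field with σ an automorphism and let a_1, …, a_n be nonzero elements of K. Then the right rank of the set {a_1, …, a_n} is less than n if and only if the left rank of the set {σ^{−1}(a_1^{−1}), …, σ^{−1}(a_n^{−1})} is less than n. More generally, for an arbitrary subset S of K∖{0}, the right rank of S equals the left rank of Ŝ = {σ^{−1}(a^{−1}) : a ∈ S}. -/

import Mathlib

/-!
Dividing `Q` on the left by `T - b` leaves the remainder `∑ N'ᵢ(b) σ⁻ⁱ(qᵢ)`, where `N'` is the
norm map of `σ⁻¹`, so left roots are the zeros of this left evaluation. Reflecting a polynomial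
of degree `≤ n` and twisting its `i`-th coefficient by `σ⁻ⁱ` is an additive bijection `P ↦ P̂`
and, as for `eval (1/x) (reflect n f) * x ^ n = eval x f`, it turns right evaluation at `a` into
left evaluation at `σ⁻¹(a⁻¹)` up to a unit:
`σⁿ(P̂ evaluated on the left at σ⁻¹(a⁻¹)) · Nₙ(a) = P(a)`.
Hence nonzero right annihilators of `S` and nonzero left annihilators of `Ŝ` correspond without
raising the degree.
-/

open Polynomial

variable {K : Type*} [Field K]

/-- `skewN σ i a = σ^{i-1}(a)⋯σ(a)·a`, with `skewN σ 0 a = 1`. -/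
def skewN (σ : K →+* K) : ℕ → K → K
  | 0, _ => 1
  | i + 1, a => σ (skewN σ i a) * a

/-- Right evaluation of a skew polynomial `P = Σ aᵢ Tⁱ` at `a`: `P(a) = Σ aᵢ Nᵢ(a)`. -/
noncomputable def skewEval (σ : K →+* K) (P : Polynomial K) (a : K) : K :=
  ∑ i ∈ P.support, P.coeff i * skewN σ i a

/-- Multiplication in the skew polynomial ring `K[T;σ]` (with `T·a = σ(a)·T`),
using `Polynomial K` as the carrier of coefficient sequences. -/
noncomputable def skewMul (σ : K →+* K) (P Q : Polynomial K) : Polynomial K :=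
  ∑ i ∈ P.support, ∑ j ∈ Q.support,
    Polynomial.C (P.coeff i * (⇑σ)^[i] (Q.coeff j)) * Polynomial.X ^ (i + j)

/-- The right rank of `S ⊆ K`: the least degree of a nonzero skew polynomial having every
element of `S` as a right root (`⊤` if none exists). -/
noncomputable def rightRank (σ : K →+* K) (S : Set K) : ℕ∞ :=
  sInf {d : ℕ∞ | ∃ P : Polynomial K, P ≠ 0 ∧ (∀ a ∈ S, skewEval σ P a = 0) ∧
    (P.natDegree : ℕ∞) = d}

/-- The left rank of `S ⊆ K`: the least degree of a nonzero skew polynomial having every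
element of `S` as a left root, i.e. lying in `(T−a)·K[T;σ]` (`⊤` if none exists). -/
noncomputable def leftRank (σ : K →+* K) (S : Set K) : ℕ∞ :=
  sInf {d : ℕ∞ | ∃ P : Polynomial K, P ≠ 0 ∧
    (∀ a ∈ S, ∃ R : Polynomial K, P = skewMul σ (Polynomial.X - Polynomial.C a) R) ∧
    (P.natDegree : ℕ∞) = d}

section SkewN

variable (f : K →+* K)

theorem skewN_succ_eq_mul (i : ℕ) (a : K) : skewN f (i + 1) a = skewN f i a * (f ^ i) a := by
  induction i with
  | zero => simp [skewN]
  | succ i ih =>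
    rw [skewN, pow_succ', RingHom.mul_def, RingHom.comp_apply]
    conv_lhs => rw [ih, map_mul]
    rw [skewN]
    ring

theorem skewN_add (i j : ℕ) (a : K) :
    skewN f (i + j) a = skewN f i a * (f ^ i) (skewN f j a) := by
  induction j with
  | zero => simp [skewN]
  | succ j ih =>
    rw [← add_assoc, skewN_succ_eq_mul, ih, skewN_succ_eq_mul, map_mul, pow_add,
      RingHom.mul_def, RingHom.comp_apply, mul_assoc]

end SkewN

theorem RingEquiv.toRingHom_pow_apply_symm_pow_apply (σ : K ≃+* K) (n : ℕ) (x : K) :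
    (σ.toRingHom ^ n) ((σ.symm.toRingHom ^ n) x) = x :=
  Function.LeftInverse.iterate σ.apply_symm_apply n x

theorem toRingHom_pow_skewN_symm_inv_mul_skewN (σ : K ≃+* K) {a : K} (ha : a ≠ 0) (j : ℕ) :
    (σ.toRingHom ^ j) (skewN σ.symm.toRingHom j (σ.symm a⁻¹)) * skewN σ.toRingHom j a = 1 := by
  induction j with
  | zero => simp [skewN]
  | succ j ih =>
    rw [skewN, skewN_succ_eq_mul, map_mul, pow_succ]
    simp only [RingHom.mul_def, RingHom.comp_apply, RingEquiv.toRingHom_eq_coe,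
      RingEquiv.coe_toRingHom, RingEquiv.apply_symm_apply, map_inv₀] at ih ⊢
    rw [mul_mul_mul_comm, ih, inv_mul_cancel₀ ((_root_.map_ne_zero _).2 ha), one_mul]

section SkewEval

variable (f : K →+* K)

theorem skewEval_zero (a : K) : skewEval f 0 a = 0 := rfl

theorem skewEval_add (P Q : K[X]) (a : K) :
    skewEval f (P + Q) a = skewEval f P a + skewEval f Q a :=
  sum_add_index P Q (fun i c => c * skewN f i a) (fun _ => zero_mul _) fun _ _ _ => add_mul _ _ _

theorem skewEval_C_mul_X_pow (c a : K) (k : ℕ) : skewEval f (C c * X ^ k) a = c * skewN f k a := by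
  rw [C_mul_X_pow_eq_monomial]
  exact sum_monomial_index c (fun i c => c * skewN f i a) (zero_mul _)

end SkewEval

theorem skewMul_X_sub_C (f : K →+* K) (b : K) (R : K[X]) :
    skewMul f (X - C b) R = X * R.map f - C b * R := by
  have hsum : skewMul f (X - C b) R =
      (X + C (-b)).sum fun i c => ∑ j ∈ R.support, C (c * f^[i] (R.coeff j)) * X ^ (i + j) := by
    rw [C_neg, ← sub_eq_add_neg]; rfl
  rw [hsum, sum_add_index _ _ _ (by simp) (by simp [add_mul, Finset.sum_add_distrib]),
    sum_X_index (by simp), sum_C_index (by simp)]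
  conv_rhs => rw [as_sum_support_C_mul_X_pow R]
  simp only [Polynomial.map_sum, Polynomial.map_mul, map_C, Polynomial.map_pow, map_X,
    Finset.mul_sum, one_mul, Function.iterate_one, Function.iterate_zero_apply, zero_add, C_mul,
    C_neg, neg_mul, Finset.sum_neg_distrib, sub_eq_add_neg]
  congr 1
  · exact Finset.sum_congr rfl fun j _ => by ring
  · simp only [mul_assoc]

section LeftEval

variable (σ : K ≃+* K) (b : K)

def leftEval : K[X] →+ K where
  toFun Q := Q.sum fun i c => skewN σ.symm.toRingHom i b * (σ.symm.toRingHom ^ i) c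
  map_zero' := sum_zero_index _
  map_add' P Q := sum_add_index _ _ _ (by simp) (by simp [mul_add])

theorem leftEval_C_mul_X_pow (c : K) (k : ℕ) :
    leftEval σ b (C c * X ^ k) = skewN σ.symm.toRingHom k b * (σ.symm.toRingHom ^ k) c := by
  rw [C_mul_X_pow_eq_monomial]
  simp [leftEval]

theorem leftEval_C (c : K) : leftEval σ b (C c) = c := by
  simpa [skewN] using leftEval_C_mul_X_pow σ b c 0

theorem leftEval_X_mul_map_sub_C_mul (R : K[X]) :
    leftEval σ b (X * R.map σ.toRingHom - C b * R) = 0 := by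
  induction R using Polynomial.induction_on' with
  | add P Q hP hQ =>
    rw [Polynomial.map_add, mul_add, mul_add, add_sub_add_comm, map_add, hP, hQ, add_zero]
  | monomial n c =>
    rw [map_monomial, ← C_mul_X_pow_eq_monomial, ← C_mul_X_pow_eq_monomial, mul_left_comm,
      ← pow_succ', ← mul_assoc, ← C_mul, map_sub, leftEval_C_mul_X_pow, leftEval_C_mul_X_pow,
      skewN_succ_eq_mul, pow_succ, RingHom.mul_def, RingHom.comp_apply, map_mul, sub_eq_zero]
    simp only [RingEquiv.toRingHom_eq_coe, RingEquiv.coe_toRingHom, RingEquiv.symm_apply_apply]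
    ring

theorem exists_eq_X_mul_map_sub_C_mul_add_C (Q : K[X]) :
    ∃ R c, Q = X * R.map σ.toRingHom - C b * R + C c := by
  induction Q using Polynomial.induction_on' with
  | add P Q hP hQ =>
    obtain ⟨R₁, c₁, rfl⟩ := hP
    obtain ⟨R₂, c₂, rfl⟩ := hQ
    exact ⟨R₁ + R₂, c₁ + c₂, by rw [Polynomial.map_add, C_add]; ring⟩
  | monomial n c =>
    induction n generalizing c with
    | zero => exact ⟨0, c, by simp⟩
    | succ n ih =>
      obtain ⟨R, c', hR⟩ := ih (b * σ.symm c)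
      refine ⟨R + monomial n (σ.symm c), c', ?_⟩
      have hX : X * (monomial n (σ.symm c)).map σ.toRingHom = monomial (n + 1) c := by
        simp [X_mul_monomial]
      rw [Polynomial.map_add, mul_add, hX, mul_add, C_mul_monomial]
      linear_combination hR

theorem exists_eq_skewMul_X_sub_C_iff (Q : K[X]) :
    (∃ R, Q = skewMul σ.toRingHom (X - C b) R) ↔ leftEval σ b Q = 0 := by
  simp only [skewMul_X_sub_C]
  constructor
  · rintro ⟨R, rfl⟩
    exact leftEval_X_mul_map_sub_C_mul σ b R
  · intro h
    obtain ⟨R, c, rfl⟩ := exists_eq_X_mul_map_sub_C_mul_add_C σ b Q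
    rw [map_add, leftEval_X_mul_map_sub_C_mul, zero_add, leftEval_C] at h
    exact ⟨R, by rw [h, C_0, add_zero]⟩

end LeftEval

section Twist

variable (f : K →+* K)

noncomputable def twist (P : K[X]) : K[X] := P.sum fun i c => C ((f ^ i) c) * X ^ i

theorem coeff_twist (P : K[X]) (n : ℕ) : (twist f P).coeff n = (f ^ n) (P.coeff n) := by
  simp only [twist, Polynomial.sum_def, finsetSum_coeff, coeff_C_mul_X_pow, Finset.sum_ite_eq]
  split_ifs with h
  · rfl
  · rw [notMem_support_iff.1 h, map_zero]

theorem twist_add (P Q : K[X]) : twist f (P + Q) = twist f P + twist f Q := by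
  ext n
  simp only [coeff_twist, coeff_add, map_add]

theorem twist_C_mul_X_pow (c : K) (k : ℕ) : twist f (C c * X ^ k) = C ((f ^ k) c) * X ^ k := by
  ext n
  simp only [coeff_twist, coeff_C_mul_X_pow]
  split_ifs with h
  · rw [h]
  · exact map_zero _

theorem natDegree_twist_le (P : K[X]) : (twist f P).natDegree ≤ P.natDegree :=
  natDegree_le_iff_coeff_eq_zero.2 fun n hn => by
    rw [coeff_twist, coeff_eq_zero_of_natDegree_lt hn, map_zero]

end Twist

theorem twist_twist_symm (σ : K ≃+* K) (P : K[X]) :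
    twist σ.toRingHom (twist σ.symm.toRingHom P) = P := by
  ext n
  rw [coeff_twist, coeff_twist, RingEquiv.toRingHom_pow_apply_symm_pow_apply]

noncomputable def skewReflect (σ : K ≃+* K) (n : ℕ) : K[X] ≃+ K[X] where
  toFun P := reflect n (twist σ.symm.toRingHom P)
  invFun Q := twist σ.toRingHom (reflect n Q)
  left_inv P := by simp only [reflect_reflect, twist_twist_symm]
  right_inv Q := by
    have h := twist_twist_symm σ.symm (reflect n Q)
    rw [RingEquiv.symm_symm] at h
    change reflect n (twist _ (twist _ (reflect n Q))) = Q
    rw [h, reflect_reflect]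
  map_add' P Q := by simp only [twist_add, reflect_add]

section SkewReflect

variable (σ : K ≃+* K) {n : ℕ}

theorem natDegree_skewReflect_le {P : K[X]} (hP : P.natDegree ≤ n) :
    (skewReflect σ n P).natDegree ≤ n :=
  natDegree_reflect_le.trans (max_le le_rfl ((natDegree_twist_le _ P).trans hP))

theorem natDegree_skewReflect_symm_le {Q : K[X]} (hQ : Q.natDegree ≤ n) :
    ((skewReflect σ n).symm Q).natDegree ≤ n :=
  (natDegree_twist_le _ _).trans (natDegree_reflect_le.trans (max_le le_rfl hQ))

theorem toRingHom_pow_leftEval_skewReflect_mul_skewN {a : K} (ha : a ≠ 0) {P : K[X]}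
    (hP : P.natDegree ≤ n) :
    (σ.toRingHom ^ n) (leftEval σ (σ.symm a⁻¹) (skewReflect σ n P)) * skewN σ.toRingHom n a =
      skewEval σ.toRingHom P a := by
  refine induction_with_natDegree_le (fun P => (σ.toRingHom ^ n)
      (leftEval σ (σ.symm a⁻¹) (skewReflect σ n P)) * skewN σ.toRingHom n a =
        skewEval σ.toRingHom P a) n ?_ ?_ ?_ P hP
  · rw [map_zero, map_zero, map_zero, zero_mul, skewEval_zero]
  · intro i r _ hi
    obtain ⟨j, rfl⟩ := Nat.exists_eq_add_of_le hi
    have hunit := congrArg (σ.toRingHom ^ i) (toRingHom_pow_skewN_symm_inv_mul_skewN σ ha j)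
    rw [map_mul, map_one] at hunit
    change (σ.toRingHom ^ (i + j)) (leftEval σ (σ.symm a⁻¹)
        (reflect (i + j) (twist σ.symm.toRingHom (C r * X ^ i)))) * _ = _
    rw [twist_C_mul_X_pow, reflect_C_mul_X_pow, revAt_le hi, Nat.add_sub_cancel_left,
      leftEval_C_mul_X_pow, skewEval_C_mul_X_pow, skewN_add, pow_add, RingHom.mul_def,
      RingHom.comp_apply, map_mul, map_mul, RingEquiv.toRingHom_pow_apply_symm_pow_apply,
      RingEquiv.toRingHom_pow_apply_symm_pow_apply]
    linear_combination (r * skewN σ.toRingHom i a) * hunit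
  · intro P Q _ _ hP hQ
    rw [map_add, map_add, map_add, add_mul, hP, hQ, skewEval_add]

end SkewReflect

theorem skewEval_eq_zero_iff_exists_skewReflect_eq_skewMul (σ : K ≃+* K) {a : K} (ha : a ≠ 0)
    {n : ℕ} {P : K[X]} (hP : P.natDegree ≤ n) :
    skewEval σ.toRingHom P a = 0 ↔
      ∃ R, skewReflect σ n P = skewMul σ.toRingHom (X - C (σ.symm a⁻¹)) R := by
  have hN : skewN σ.toRingHom n a ≠ 0 :=
    right_ne_zero_of_mul_eq_one (toRingHom_pow_skewN_symm_inv_mul_skewN σ ha n)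
  rw [exists_eq_skewMul_X_sub_C_iff, ← toRingHom_pow_leftEval_skewReflect_mul_skewN σ ha hP,
    mul_eq_zero, or_iff_left hN, map_eq_zero_iff _ (σ.toRingHom ^ n).injective]

section Rank

variable (σ : K ≃+* K) {S : Set K}

theorem leftRank_image_le_rightRank (hS : (0 : K) ∉ S) :
    leftRank σ.toRingHom ((fun x : K => σ.symm x⁻¹) '' S) ≤ rightRank σ.toRingHom S := by
  refine le_sInf ?_
  rintro _ ⟨P, hP, hroots, rfl⟩
  have hroots' : ∀ b ∈ (fun x : K => σ.symm x⁻¹) '' S,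
      ∃ R, skewReflect σ P.natDegree P = skewMul σ.toRingHom (X - C b) R := by
    rintro _ ⟨a, ha, rfl⟩
    exact (skewEval_eq_zero_iff_exists_skewReflect_eq_skewMul σ (ne_of_mem_of_not_mem ha hS)
      le_rfl).1 (hroots a ha)
  exact sInf_le_of_le ⟨_, (map_ne_zero_iff _ (skewReflect σ _).injective).2 hP, hroots', rfl⟩
    (Nat.cast_le.2 (natDegree_skewReflect_le σ le_rfl))

theorem rightRank_le_leftRank_image (hS : (0 : K) ∉ S) :
    rightRank σ.toRingHom S ≤ leftRank σ.toRingHom ((fun x : K => σ.symm x⁻¹) '' S) := by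
  refine le_sInf ?_
  rintro _ ⟨Q, hQ, hroots, rfl⟩
  have hP := natDegree_skewReflect_symm_le σ (le_refl Q.natDegree)
  have hroots' : ∀ a ∈ S, skewEval σ.toRingHom ((skewReflect σ Q.natDegree).symm Q) a = 0 := by
    intro a ha
    rw [skewEval_eq_zero_iff_exists_skewReflect_eq_skewMul σ (ne_of_mem_of_not_mem ha hS) hP,
      AddEquiv.apply_symm_apply]
    exact hroots _ ⟨a, ha, rfl⟩
  exact sInf_le_of_le ⟨_, (map_ne_zero_iff _ (skewReflect σ _).symm.injective).2 hQ, hroots', rfl⟩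
    (Nat.cast_le.2 hP)

theorem rightRank_eq_leftRank_image (hS : (0 : K) ∉ S) :
    rightRank σ.toRingHom S = leftRank σ.toRingHom ((fun x : K => σ.symm x⁻¹) '' S) :=
  (rightRank_le_leftRank_image σ hS).antisymm (leftRank_image_le_rightRank σ hS)

end Rank

/-- For an automorphism `σ`, the right rank of `{a₁,…,aₙ} ⊆ K∖{0}` is `< n` iff the left
rank of `{σ⁻¹(a₁⁻¹),…,σ⁻¹(aₙ⁻¹)}` is `< n`; in general the right rank of `S ⊆ K∖{0}`
equals the left rank of `Ŝ = {σ⁻¹(a⁻¹) : a ∈ S}`. -/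
theorem stmt_11 {K : Type*} [Field K] (σ : K ≃+* K) :
    (∀ {n : ℕ} (a : Fin n → K), (∀ i, a i ≠ 0) →
      (rightRank σ.toRingHom (Set.range a) < (n : ℕ∞) ↔
        leftRank σ.toRingHom ((fun x : K => σ.symm x⁻¹) '' Set.range a) < (n : ℕ∞))) ∧
    (∀ S : Set K, (0 : K) ∉ S →
      rightRank σ.toRingHom S = leftRank σ.toRingHom ((fun x : K => σ.symm x⁻¹) '' S)) := by
  refine ⟨fun a ha => ?_, fun S hS => rightRank_eq_leftRank_image σ hS⟩
  rw [rightRank_eq_leftRank_image σ (by rintro ⟨i, hi⟩; exact ha i hi)]
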